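/- Let (Γ, c₀, c₁, …, c_r, t) be a decorated cactus and let 1 ≤ i ≤ r. Suppose f ∈ c_i and k ≥ 1 is an integer such that (ι ∘ N)^k(f) ∈ c_i while (ι ∘ N)^l(f) ∉ c_i for every l with 1 ≤ l ≤ k−1. Then f = (N ∘ ι)((ι ∘ N)^k(f)). (Equivalently: the first return of the trajectory f, (ι∘N)(f), (ι∘N)²(f), … to the cycle c_i is the element ι(N^{−1}(f)).) -/

import Mathlib

open scoped Classical

/-- A *decorated cactus* (Definition 8.1 of the paper): a connected ribbon graph `Γ`
of genus `0`, together with cycles `c 0, c 1, …, c r` (orbits of `rot ∘ inv` on the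
set of flags) whose disjoint union is the set of flags, such that every pair
`{f, inv f}` meets `c 0` in exactly one flag, and a distinguished tail `tail`.

* `V` is the (finite) set of vertices, `F` the (finite) set of flags;
* `lam : F → V` assigns to a flag its vertex, `inv` is the involution `ι`
  (whose non-fixed orbits are the edges, and whose fixed points are the tails);
* `rot : F ≃ F` is the ribbon structure `N`, preserving `lam` and acting
  transitively on every fiber of `lam`;
* connectivity is phrased via walks of edges, and genus `0` via
  `#V + #cycles = #edges + 2` (i.e. `2 - 2g = #V - #E + #cycles` with `g = 0`). -/
structure DecoratedCactus (r : ℕ) : Type 1 where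
  V : Type
  F : Type
  [finV : Fintype V]
  [finF : Fintype F]
  [decV : DecidableEq V]
  [decF : DecidableEq F]
  lam : F → V
  inv : F → F
  inv_invol : ∀ f, inv (inv f) = f
  rot : F ≃ F
  lam_rot : ∀ f, lam (rot f) = lam f
  rot_trans : ∀ f g : F, lam f = lam g → ∃ n : ℕ, (fun x => rot x)^[n] f = g
  conn : Nonempty V ∧ ∀ v w : V,
    Relation.ReflTransGen (fun a b => ∃ f, inv f ≠ f ∧ lam f = a ∧ lam (inv f) = b) v w
  genus_zero :
    Fintype.card V +
      (Finset.univ.image (fun f : F =>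
        Finset.univ.filter (fun g : F => ∃ n : ℕ, (fun x => rot (inv x))^[n] f = g))).card =
    ((Finset.univ.filter (fun f : F => inv f ≠ f)).image (fun f => s(f, inv f))).card + 2
  c : Fin (r + 1) → Set F
  c_cycle : ∀ i, ∃ f : F, c i = {g | ∃ n : ℕ, (fun x => rot (inv x))^[n] f = g}
  c_disj : ∀ i j, i ≠ j → c i ∩ c j = ∅
  c_cover : (⋃ i, c i) = (Set.univ : Set F)
  flag_c0 : ∀ f : F, ({f, inv f} ∩ c 0 : Set F).encard = 1
  tail : F
  tail_tail : inv tail = tail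

attribute [instance] DecoratedCactus.finV DecoratedCactus.finF
  DecoratedCactus.decV DecoratedCactus.decF

/-! Let `B` be the bipartite graph joining every vertex of `Γ` to the cycles `c i`, `i ≠ 0`,
passing through it. Tails lie on `c 0` and every edge has exactly one flag off `c 0`, so the
flags off `c 0` correspond to the edges of `Γ` and surject onto the edges of `B`. The genus-zero
relation `#V + r = #E + 1` then forces the connected graph `B` to be a tree and this surjection
to be a bijection: a vertex meets each inner cycle in at most one flag.

Up to `ι`, the trajectory of `f` under `ι ∘ N` runs along `c 0`, so while it stays off `c i` it
traces a walk in `B` avoiding `c i`, from the vertex of `f` to that of `N (ι ((ι ∘ N)^k f))`.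
Both flags lie on `c i`, so in the tree `B` these vertices coincide, and then so do the flags. -/

theorem Equiv.Perm.exists_iterate_eq_iff_sameCycle {α : Type*} [Finite α] (σ : Equiv.Perm α)
    (x y : α) : (∃ n : ℕ, σ^[n] x = y) ↔ σ.SameCycle x y := by
  simp only [Equiv.Perm.iterate_eq_pow]
  exact ⟨fun ⟨n, hn⟩ => ⟨n, by rwa [zpow_natCast]⟩, Equiv.Perm.SameCycle.exists_nat_pow_eq⟩

theorem SimpleGraph.IsAcyclic.mem_support_of_adj_of_adj {V : Type*} {G : SimpleGraph V}
    (hG : G.IsAcyclic) {u a w : V} (hua : G.Adj u a) (haw : G.Adj a w) (huw : u ≠ w)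
    (q : G.Walk u w) : a ∈ q.support := by
  have hp : (SimpleGraph.Walk.cons hua (SimpleGraph.Walk.cons haw .nil)).IsPath := by
    simp [hua.ne, haw.ne, huw]
  have hq : q.toPath = ⟨_, hp⟩ := (hG.subsingleton_path u w).elim _ _
  apply q.support_toPath_subset_support
  simp [hq]

namespace DecoratedCactus

variable {r : ℕ} (d : DecoratedCactus r)

def cyclePerm : Equiv.Perm d.F := (Function.Involutive.toPerm d.inv d.inv_invol).trans d.rot

theorem cyclePerm_apply (a : d.F) : d.cyclePerm a = d.rot (d.inv a) := rfl

variable {d}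

theorem mem_c_iff_sameCycle {i : Fin (r + 1)} {a : d.F} (ha : a ∈ d.c i) (b : d.F) :
    b ∈ d.c i ↔ d.cyclePerm.SameCycle a b := by
  obtain ⟨a₀, hc⟩ := d.c_cycle i
  have hmem : ∀ x, x ∈ d.c i ↔ d.cyclePerm.SameCycle a₀ x := fun x => by
    rw [hc]; exact d.cyclePerm.exists_iterate_eq_iff_sameCycle a₀ x
  rw [hmem]
  exact ⟨((hmem a).1 ha).symm.trans, ((hmem a).1 ha).trans⟩

theorem cyclePerm_mem_c {i : Fin (r + 1)} {a : d.F} (ha : a ∈ d.c i) : d.cyclePerm a ∈ d.c i :=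
  (mem_c_iff_sameCycle ha _).2 (Equiv.Perm.SameCycle.refl _ _).apply_right

theorem c_nonempty (i : Fin (r + 1)) : (d.c i).Nonempty := by
  obtain ⟨a₀, hc⟩ := d.c_cycle i
  exact ⟨a₀, hc ▸ ⟨0, rfl⟩⟩

theorem exists_mem_c (a : d.F) : ∃ i, a ∈ d.c i := by
  simpa using d.c_cover.symm.subset (Set.mem_univ a)

theorem eq_of_mem_c {i j : Fin (r + 1)} {a : d.F} (hi : a ∈ d.c i) (hj : a ∈ d.c j) : i = j := by
  by_contra hij
  exact (d.c_disj i j hij).subset ⟨hi, hj⟩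

variable (d)

noncomputable def face (a : d.F) : Fin (r + 1) := (d.exists_mem_c a).choose

theorem mem_c_face (a : d.F) : a ∈ d.c (d.face a) := (d.exists_mem_c a).choose_spec

variable {d}

theorem face_eq {i : Fin (r + 1)} {a : d.F} (ha : a ∈ d.c i) : d.face a = i :=
  eq_of_mem_c (d.mem_c_face a) ha

theorem face_surjective : Function.Surjective d.face := fun i =>
  let ⟨a, ha⟩ := d.c_nonempty i
  ⟨a, face_eq ha⟩

theorem face_ne_zero {a : d.F} (ha : a ∉ d.c 0) : d.face a ≠ 0 := fun h =>
  ha (h ▸ d.mem_c_face a)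

theorem mem_c_zero_of_inv_eq {a : d.F} (ha : d.inv a = a) : a ∈ d.c 0 := by
  have h := d.flag_c0 a
  rw [ha, Set.pair_eq_singleton] at h
  by_contra hna
  simp [Set.singleton_inter_eq_empty.2 hna] at h

theorem inv_mem_c_zero {a : d.F} (ha : a ∉ d.c 0) : d.inv a ∈ d.c 0 := by
  have h := d.flag_c0 a
  by_contra hna
  simp [Set.insert_inter_of_notMem ha, Set.singleton_inter_eq_empty.2 hna] at h

theorem inv_eq_of_mem_c_zero {a : d.F} (ha : a ∈ d.c 0) (ha' : d.inv a ∈ d.c 0) :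
    d.inv a = a := by
  have h := d.flag_c0 a
  by_contra hne
  rw [Set.inter_eq_left.2 (Set.insert_subset ha (Set.singleton_subset_iff.2 ha')),
    Set.encard_pair (Ne.symm hne)] at h
  norm_num at h

theorem card_cycles :
    (Finset.univ.image (fun f : d.F =>
      Finset.univ.filter (fun g : d.F => ∃ n : ℕ, (fun x => d.rot (d.inv x))^[n] f = g))).card =
    r + 1 := by
  have horbit : ∀ a : d.F,
      Finset.univ.filter (fun b => ∃ n : ℕ, (fun x => d.rot (d.inv x))^[n] a = b) =
      Finset.univ.filter (· ∈ d.c (d.face a)) := fun a => by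
    ext b
    simp only [Finset.mem_filter, Finset.mem_univ, true_and]
    exact (d.cyclePerm.exists_iterate_eq_iff_sameCycle a b).trans
      (mem_c_iff_sameCycle (d.mem_c_face a) b).symm
  have hinj : Function.Injective fun i : Fin (r + 1) => Finset.univ.filter (· ∈ d.c i) := by
    intro i j hij
    obtain ⟨a, ha⟩ := d.c_nonempty i
    have hj := Finset.ext_iff.1 hij a
    simp only [Finset.mem_filter, Finset.mem_univ, true_and] at hj
    exact eq_of_mem_c ha (hj.1 ha)
  calc _ = ((Finset.univ.image d.face).image fun i => Finset.univ.filter (· ∈ d.c i)).card := by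
        simp only [horbit, Finset.image_image]; rfl
    _ = r + 1 := by
      rw [Finset.image_univ_of_surjective face_surjective, Finset.card_image_of_injective _ hinj,
        Finset.card_univ, Fintype.card_fin]

theorem card_edges :
    ((Finset.univ.filter (fun f : d.F => d.inv f ≠ f)).image (fun f => s(f, d.inv f))).card =
    Nat.card {a : d.F // a ∉ d.c 0} := by
  have himage : (Finset.univ.filter (fun f : d.F => d.inv f ≠ f)).image (fun f => s(f, d.inv f)) =
      (Finset.univ.filter (· ∉ d.c 0)).image (fun f => s(f, d.inv f)) := by
    ext e
    simp only [Finset.mem_image, Finset.mem_filter, Finset.mem_univ, true_and]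
    constructor
    · rintro ⟨a, ha, rfl⟩
      by_cases ha0 : a ∈ d.c 0
      · exact ⟨d.inv a, fun h => ha (inv_eq_of_mem_c_zero ha0 h),
          by rw [d.inv_invol, Sym2.eq_swap]⟩
      · exact ⟨a, ha0, rfl⟩
    · rintro ⟨a, ha, rfl⟩
      exact ⟨a, fun h => ha (mem_c_zero_of_inv_eq h), rfl⟩
  rw [himage, Finset.card_image_of_injOn, Nat.card_eq_fintype_card, Fintype.card_subtype]
  intro a ha b hb hab
  rcases Sym2.eq_iff.1 hab with ⟨h, -⟩ | ⟨h, -⟩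
  · exact h
  · simp only [Finset.coe_filter, Finset.mem_univ, true_and, Set.mem_ofPred_eq] at ha hb
    exact absurd (h ▸ inv_mem_c_zero hb) ha

variable (d)

theorem card_vertices_add_eq : Nat.card d.V + r = Nat.card {a : d.F // a ∉ d.c 0} + 1 := by
  have h := d.genus_zero
  rw [card_cycles, card_edges] at h
  rw [Nat.card_eq_fintype_card]
  omega

def incidenceGraph : SimpleGraph (d.V ⊕ {i : Fin (r + 1) // i ≠ 0}) where
  Adj
    | .inl v, .inr i => ∃ a ∈ d.c i, d.lam a = v
    | .inr i, .inl v => ∃ a ∈ d.c i, d.lam a = v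
    | _, _ => False
  symm := ⟨by rintro (v | i) (w | j) h <;> exact h⟩
  loopless := ⟨by rintro (v | i) h <;> exact h⟩

variable {d}

theorem card_incidenceGraph_vertices :
    Nat.card (d.V ⊕ {i : Fin (r + 1) // i ≠ 0}) = Nat.card {a : d.F // a ∉ d.c 0} + 1 := by
  have hfaces : Nat.card {i : Fin (r + 1) // i ≠ 0} = r := by simp
  rw [Nat.card_sum, hfaces, d.card_vertices_add_eq]

theorem incidenceGraph_adj_of_mem {i : Fin (r + 1)} (hi : i ≠ 0) {a : d.F} (ha : a ∈ d.c i) :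
    d.incidenceGraph.Adj (.inl (d.lam a)) (.inr ⟨i, hi⟩) :=
  ⟨a, ha, rfl⟩

/-- The cycle through `a` also passes through the vertex of `ι a`, at the flag `N (ι a)`. -/
theorem incidenceGraph_adj_inv_of_mem {i : Fin (r + 1)} (hi : i ≠ 0) {a : d.F}
    (ha : a ∈ d.c i) : d.incidenceGraph.Adj (.inr ⟨i, hi⟩) (.inl (d.lam (d.inv a))) :=
  ⟨d.cyclePerm a, cyclePerm_mem_c ha, d.lam_rot _⟩

theorem incidenceGraph_connected : d.incidenceGraph.Connected := by
  have hinner : ∀ a : d.F, a ∉ d.c 0 →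
      d.incidenceGraph.Reachable (.inl (d.lam a)) (.inl (d.lam (d.inv a))) := fun a ha =>
    (incidenceGraph_adj_of_mem (face_ne_zero ha) (d.mem_c_face a)).reachable.trans
      (incidenceGraph_adj_inv_of_mem (face_ne_zero ha) (d.mem_c_face a)).reachable
  have hedge : ∀ a : d.F, d.inv a ≠ a →
      d.incidenceGraph.Reachable (.inl (d.lam a)) (.inl (d.lam (d.inv a))) := by
    intro a ha
    by_cases ha0 : a ∈ d.c 0
    · have h := hinner (d.inv a) fun h => ha (inv_eq_of_mem_c_zero ha0 h)
      rw [d.inv_invol] at h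
      exact h.symm
    · exact hinner a ha0
  have hvertex : ∀ v w : d.V, d.incidenceGraph.Reachable (.inl v) (.inl w) := by
    intro v w
    induction d.conn.2 v w with
    | refl => rfl
    | tail _ hstep ih =>
      obtain ⟨a, ha, rfl, rfl⟩ := hstep
      exact ih.trans (hedge a ha)
  obtain ⟨v₀⟩ := d.conn.1
  refine (SimpleGraph.connected_iff_exists_forall_reachable _).2 ⟨.inl v₀, ?_⟩
  rintro (w | ⟨i, hi⟩)
  · exact hvertex v₀ w
  · obtain ⟨a, ha⟩ := d.c_nonempty i
    exact (hvertex v₀ _).trans (incidenceGraph_adj_of_mem hi ha).reachable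

variable (d)

noncomputable def innerFlagEdge (a : {a : d.F // a ∉ d.c 0}) : d.incidenceGraph.edgeSet :=
  ⟨s(.inl (d.lam a), .inr ⟨d.face a, face_ne_zero a.2⟩),
    incidenceGraph_adj_of_mem _ (d.mem_c_face a)⟩

variable {d}

theorem innerFlagEdge_surjective : Function.Surjective d.innerFlagEdge := by
  rintro ⟨e, he⟩
  induction e using Sym2.ind with | _ x y => ?_
  rw [SimpleGraph.mem_edgeSet] at he
  rcases x with v | ⟨i, hi⟩ <;> rcases y with w | ⟨j, hj⟩
  · exact he.elim
  · obtain ⟨a, ha, rfl⟩ := he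
    refine ⟨⟨a, fun h => hj (eq_of_mem_c ha h)⟩, Subtype.ext ?_⟩
    simp only [innerFlagEdge, face_eq ha]
  · obtain ⟨a, ha, rfl⟩ := he
    refine ⟨⟨a, fun h => hi (eq_of_mem_c ha h)⟩, Subtype.ext ?_⟩
    simp only [innerFlagEdge, face_eq ha]
    exact Sym2.eq_swap
  · exact he.elim

theorem card_edgeSet_incidenceGraph :
    Nat.card d.incidenceGraph.edgeSet = Nat.card {a : d.F // a ∉ d.c 0} := by
  have hconn := d.incidenceGraph_connected.card_vert_le_card_edgeSet_add_one
  have hsurj := Nat.card_le_card_of_surjective d.innerFlagEdge innerFlagEdge_surjective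
  rw [card_incidenceGraph_vertices] at hconn
  omega

theorem incidenceGraph_isTree : d.incidenceGraph.IsTree := by
  refine SimpleGraph.isTree_iff_connected_and_card.2 ⟨incidenceGraph_connected, ?_⟩
  rw [card_edgeSet_incidenceGraph, card_incidenceGraph_vertices]

theorem innerFlagEdge_injective : Function.Injective d.innerFlagEdge :=
  (innerFlagEdge_surjective.bijective_of_nat_card_le card_edgeSet_incidenceGraph.ge).1

theorem eq_of_mem_c_of_walk {i : Fin (r + 1)} (hi : i ≠ 0) {a b : d.F} (ha : a ∈ d.c i)
    (hb : b ∈ d.c i) (q : d.incidenceGraph.Walk (.inl (d.lam a)) (.inl (d.lam b)))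
    (hq : .inr ⟨i, hi⟩ ∉ q.support) : a = b := by
  have hlam : d.lam a = d.lam b := by
    by_contra hne
    exact hq (incidenceGraph_isTree.isAcyclic.mem_support_of_adj_of_adj
      (incidenceGraph_adj_of_mem hi ha) (incidenceGraph_adj_of_mem hi hb).symm
      (by simpa using hne) q)
  have hinner : ∀ {x}, x ∈ d.c i → x ∉ d.c 0 := fun hx h => hi (eq_of_mem_c hx h)
  have hedge : d.innerFlagEdge ⟨a, hinner ha⟩ = d.innerFlagEdge ⟨b, hinner hb⟩ := by
    simp only [innerFlagEdge, hlam, face_eq ha, face_eq hb]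
  simpa using innerFlagEdge_injective hedge

theorem inv_iterate_mem_c_zero {g : d.F} (hg : d.inv g ∈ d.c 0) (n : ℕ) :
    d.inv ((fun x => d.inv (d.rot x))^[n] g) ∈ d.c 0 := by
  induction n with
  | zero => exact hg
  | succ n ih =>
    have h := cyclePerm_mem_c ih
    rwa [cyclePerm_apply, d.inv_invol, ← d.inv_invol (d.rot _),
      ← Function.iterate_succ_apply' (fun x => d.inv (d.rot x))] at h

theorem exists_walk_inv_avoiding {i : Fin (r + 1)} (hi : i ≠ 0) {g : d.F}
    (hg : d.inv g ∈ d.c 0) (hgi : g ∉ d.c i) :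
    ∃ q : d.incidenceGraph.Walk (.inl (d.lam (d.inv g))) (.inl (d.lam g)),
      .inr ⟨i, hi⟩ ∉ q.support := by
  by_cases htail : d.inv g = g
  · exact ⟨SimpleGraph.Walk.nil.copy rfl (by rw [htail]), by simp⟩
  have hj := face_ne_zero fun h => htail (inv_eq_of_mem_c_zero h hg)
  refine ⟨.cons (incidenceGraph_adj_inv_of_mem hj (d.mem_c_face g)).symm
    (.cons (incidenceGraph_adj_of_mem hj (d.mem_c_face g)).symm .nil), ?_⟩
  have hface : d.face g ≠ i := fun h => hgi (h ▸ d.mem_c_face g)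
  simp [Ne.symm hface]

theorem exists_walk_iterate_avoiding {i : Fin (r + 1)} (hi : i ≠ 0) {g : d.F}
    (hg : d.inv g ∈ d.c 0) (n : ℕ) (hn : ∀ l < n, (fun x => d.inv (d.rot x))^[l] g ∉ d.c i) :
    ∃ q : d.incidenceGraph.Walk (.inl (d.lam (d.inv g)))
      (.inl (d.lam (d.inv ((fun x => d.inv (d.rot x))^[n] g)))), .inr ⟨i, hi⟩ ∉ q.support := by
  induction n with
  | zero => exact ⟨.nil, by simp⟩
  | succ n ih =>
    obtain ⟨q, hq⟩ := ih fun l hl => hn l (by omega)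
    obtain ⟨q', hq'⟩ := exists_walk_inv_avoiding hi (inv_iterate_mem_c_zero hg n) (hn n (by omega))
    refine ⟨q.append (q'.copy rfl ?_), ?_⟩
    · rw [Function.iterate_succ_apply', d.inv_invol, d.lam_rot]
    · rw [SimpleGraph.Walk.mem_support_append_iff, SimpleGraph.Walk.support_copy]
      exact fun h => h.elim hq hq'

end DecoratedCactus

/-- key claim in the proof of Lemma 8.4.  Let `f ∈ c i` (`i ≠ 0`)
and let `k ≥ 1` be such that `(ι∘N)^k f ∈ c i` while `(ι∘N)^l f ∉ c i` for
`1 ≤ l ≤ k − 1`.  Then `f = (N∘ι)((ι∘N)^k f)`: the first return of the trajectory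
of `f` under `ι∘N` to the cycle `c i` is the element `ι(N⁻¹ f)`. -/
theorem DecoratedCactus.first_return_eq {r : ℕ} (d : DecoratedCactus r)
    (i : Fin (r + 1)) (hi : i ≠ 0) (f : d.F) (hf : f ∈ d.c i)
    (k : ℕ) (hk : 1 ≤ k)
    (hret : (fun x => d.inv (d.rot x))^[k] f ∈ d.c i)
    (hfirst : ∀ l, 1 ≤ l → l ≤ k - 1 → (fun x => d.inv (d.rot x))^[l] f ∉ d.c i) :
    f = d.rot (d.inv ((fun x => d.inv (d.rot x))^[k] f)) := by
  obtain ⟨m, rfl⟩ : ∃ m, k = m + 1 := ⟨k - 1, by omega⟩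
  have hstart : d.inv (d.inv (d.rot f)) ∈ d.c 0 := by
    rw [d.inv_invol, ← d.inv_invol f]
    exact cyclePerm_mem_c (inv_mem_c_zero fun h => hi (eq_of_mem_c hf h))
  obtain ⟨q, hq⟩ := exists_walk_iterate_avoiding hi hstart m
    fun l hl => hfirst (l + 1) (by omega) (by omega)
  refine eq_of_mem_c_of_walk hi hf (cyclePerm_mem_c hret) (q.copy ?_ ?_)
    (by rwa [SimpleGraph.Walk.support_copy])
  · rw [d.inv_invol, d.lam_rot]
  · rw [d.lam_rot, Function.iterate_succ_apply]
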